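/- Let n ≥ 2, p ≥ 1, ρ = exp(2πi/n), and let s₁,…,s_p ∈ ℂ be nonzero with (s_{d′}/s_d)ⁿ ≠ 1 for all d ≠ d′ (equivalently, s_{d′}/s_d is not an integer power of ρ, so all positions are distinct). Consider the np vortices at positions z_{k,d} = s_d·ρᵏ (0 ≤ k ≤ n−1, 1 ≤ d ≤ p), where every vortex of the d-th polygon has the same vorticity Γ_d ∈ ℝ, Γ_d ≠ 0. If this configuration is a relative equilibrium with angular velocity ω ∈ ℝ, then v_{k,d} = i·ω·z_{k,d} for every k and d. In particular the configuration is not a rigid translation, and if ω ≠ 0 the center of rotation is the common center 0 of the polygons. -/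

import Mathlib

open Finset

/-- **The center of nested regular polygons is steady.**
For a relative equilibrium formed of `p` concentric regular `n`-gons with the same
vorticity on each `n`-gon, every velocity satisfies `v_{k,d} = i ω z_{k,d}`. In
particular the motion is not a rigid translation, and if `ω ≠ 0` the center of
rotation is the common center `0` of the polygons. -/
theorem nested_polygons_center_steady
    (n p : ℕ) (hn : 2 ≤ n) (hp : 1 ≤ p)
    (ρ : ℂ) (hρ : ρ = Complex.exp (2 * Real.pi * Complex.I / n))
    (s : Fin p → ℂ) (hs : ∀ d, s d ≠ 0)
    (hsep : ∀ d d', d ≠ d' → (s d' / s d) ^ n ≠ 1)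
    (Γ : Fin p → ℝ) (hΓ : ∀ d, Γ d ≠ 0)
    (z : Fin n × Fin p → ℂ) (hz : ∀ q, z q = s q.2 * ρ ^ (q.1 : ℕ))
    (v : Fin n × Fin p → ℂ)
    (hv : ∀ q, v q = Complex.I *
      ∑ q' ∈ univ \ {q}, (Γ q'.2 : ℂ) / (starRingEnd ℂ (z q) - starRingEnd ℂ (z q')))
    (ω : ℝ)
    (hre : ∀ q q', v q' - v q = Complex.I * (ω : ℂ) * (z q' - z q)) :
    (∀ q, v q = Complex.I * (ω : ℂ) * z q) ∧
    ¬ (∃ c : ℂ, c ≠ 0 ∧ ∀ q, v q = c) := by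
  have hnz : NeZero n := ⟨by omega⟩
  have hprim : IsPrimitiveRoot ρ n := by
    rw [hρ]; exact Complex.isPrimitiveRoot_exp n (by omega)
  have hρn : ρ ^ n = 1 := hprim.pow_eq_one
  have hρ1 : ρ ≠ 1 := hprim.ne_one hn
  have habs : ‖ρ‖ = 1 := by
    have h : ‖ρ‖ ^ n = 1 := by rw [← norm_pow, hρn, norm_one]
    rcases lt_trichotomy (‖ρ‖) 1 with h1 | h1 | h1
    · exact absurd h (ne_of_lt (pow_lt_one₀ (norm_nonneg ρ) h1 (by omega)))
    · exact h1
    · exact absurd h (ne_of_gt (one_lt_pow₀ h1 (by omega)))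
  have hmc : ρ * (starRingEnd ℂ) ρ = 1 := by
    rw [Complex.mul_conj, Complex.normSq_eq_norm_sq, habs]; norm_num
  have hconj : (starRingEnd ℂ) ρ = ρ⁻¹ := (inv_eq_of_mul_eq_one_right hmc).symm
  have h1n : ((1 : Fin n) : ℕ) = 1 := by
    rw [Fin.val_one']
    exact Nat.mod_eq_of_lt (by omega)
  have hpow : ∀ a : ℕ, ρ ^ (a % n) = ρ ^ a := by
    intro a
    conv_rhs => rw [← Nat.mod_add_div a n]
    rw [pow_add, pow_mul, hρn, one_pow, mul_one]
  set σ : Fin n × Fin p ≃ Fin n × Fin p :=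
    (Equiv.addRight (1 : Fin n)).prodCongr (Equiv.refl (Fin p)) with hσ
  have hσ1 : ∀ q : Fin n × Fin p, (σ q).1 = q.1 + 1 := fun q => rfl
  have hσ2 : ∀ q : Fin n × Fin p, (σ q).2 = q.2 := fun q => rfl
  have hzσ : ∀ q, z (σ q) = ρ * z q := by
    intro q
    rw [hz, hz, hσ1, hσ2]
    have hv1 : ((q.1 + 1 : Fin n) : ℕ) = (q.1.val + 1) % n := by
      rw [Fin.val_add, h1n]
    rw [hv1, hpow, pow_succ]
    ring
  have hvσ : ∀ q, v (σ q) = ρ * v q := by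
    intro q
    rw [hv (σ q), hv q]
    have hsum : ∑ q' ∈ univ \ {q},
          ρ * ((Γ q'.2 : ℂ) / ((starRingEnd ℂ) (z q) - (starRingEnd ℂ) (z q')))
        = ∑ q' ∈ univ \ {σ q},
          (Γ q'.2 : ℂ) / ((starRingEnd ℂ) (z (σ q)) - (starRingEnd ℂ) (z q')) := by
      refine Finset.sum_equiv σ ?_ ?_
      · intro i; simp [Finset.mem_sdiff]
      · intro i hi
        have hd : (starRingEnd ℂ) (z (σ q)) - (starRingEnd ℂ) (z (σ i))
            = ρ⁻¹ * ((starRingEnd ℂ) (z q) - (starRingEnd ℂ) (z i)) := by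
          rw [hzσ, hzσ, map_mul, map_mul, hconj]; ring
        rw [hσ2, hd, div_mul_eq_div_div, div_eq_mul_inv ((Γ i.2 : ℂ)) ρ⁻¹, inv_inv,
          mul_comm ((Γ i.2 : ℂ)) ρ, mul_div_assoc]
    rw [← hsum, ← Finset.mul_sum]
    ring
  -- part 1
  set d0 : Fin p := ⟨0, hp⟩ with hd0
  set q0 : Fin n × Fin p := ((0 : Fin n), d0) with hq0
  have hc : ∀ q, v q = Complex.I * (ω : ℂ) * z q + (v q0 - Complex.I * (ω : ℂ) * z q0) := by
    intro q
    linear_combination hre q0 q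
  have hc0 : v q0 - Complex.I * (ω : ℂ) * z q0 = 0 := by
    have h1 := hc (σ q0)
    rw [hvσ, hzσ] at h1
    have h2 : (ρ - 1) * (v q0 - Complex.I * (ω : ℂ) * z q0) = 0 := by
      linear_combination h1
    rcases mul_eq_zero.1 h2 with h | h
    · exact absurd (sub_eq_zero.1 h) hρ1
    · exact h
  have key : ∀ q, v q = Complex.I * (ω : ℂ) * z q := by
    intro q
    rw [hc q, hc0, add_zero]
  refine ⟨key, ?_⟩
  rintro ⟨c, hc0', hcall⟩
  set q1 : Fin n × Fin p := ((1 : Fin n), d0) with hq1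
  have hz0 : z q0 = s d0 := by
    rw [hz]
    show s d0 * ρ ^ ((0 : Fin n) : ℕ) = s d0
    simp
  have hz1 : z q1 = s d0 * ρ := by
    rw [hz]
    show s d0 * ρ ^ ((1 : Fin n) : ℕ) = s d0 * ρ
    rw [h1n, pow_one]
  have e0 : Complex.I * (ω : ℂ) * z q0 = c := by rw [← key q0, hcall q0]
  have e1 : Complex.I * (ω : ℂ) * z q1 = c := by rw [← key q1, hcall q1]
  have hdiff : Complex.I * (ω : ℂ) * (s d0 * (1 - ρ)) = 0 := by
    rw [← hz0] at *
    linear_combination e0 - e1 + Complex.I * (ω:ℂ) * hz1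
  have hne : s d0 * (1 - ρ) ≠ 0 :=
    mul_ne_zero (hs d0) (sub_ne_zero.2 (Ne.symm hρ1))
  have hω : Complex.I * (ω : ℂ) = 0 := by
    rcases mul_eq_zero.1 hdiff with h | h
    · exact h
    · exact absurd h hne
  apply hc0'
  rw [← e0, hω, zero_mul]
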